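/- arXiv:2106.01912 — 2 statements merged into one kernel-verified Lean document; each statement's English description precedes it below -/
import Mathlib

section
/- Let δ < 0, let n ≥ 1 be an integer, and let x, y, h be nonnegative reals with y ≤ x. Suppose y·h ≥ 1 + (δ/n)·(x² − y²) and x + y ≤ n·h/(−δ). Then x·h ≥ 1. -/
/-- Abstract algebraic core: if y·h ≥ 1 + (δ/n)(x² − y²) and x + y ≤ nh/(−δ), then x·h ≥ 1. -/
theorem abstract_core (δ : ℝ) (hδ : δ < 0) (n : ℕ) (hn : 1 ≤ n)
    (x y h : ℝ) (hx : 0 ≤ x) (hy : 0 ≤ y) (hh : 0 ≤ h) (hyx : y ≤ x)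
    (hkey : y * h ≥ 1 + (δ / n) * (x ^ 2 - y ^ 2))
    (hclaim : x + y ≤ n * h / (-δ)) :
    x * h ≥ 1 := by
  have hn0 : (0:ℝ) < n := by exact_mod_cast Nat.lt_of_lt_of_le Nat.zero_lt_one hn
  have hmul : (x + y) * (-δ) ≤ n * h := (le_div_iff₀ (by linarith)).mp hclaim
  have hkey' : n * (y * h) ≥ n + δ * (x ^ 2 - y ^ 2) := by
    have := mul_le_mul_of_nonneg_left hkey (le_of_lt hn0)
    field_simp at this ⊢
    nlinarith
  nlinarith [mul_le_mul_of_nonneg_right hmul (by linarith : (0:ℝ) ≤ x - y)]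
end

section
/- Let δ < 0 and let x, y, h be positive reals with y ≤ x. If x·y + x² ≤ 1/(−δ) and y·h ≥ 1 + δ·(x² − y²), then x + y ≤ h/(−δ) and consequently x·h ≥ 1. -/
/-- n = 1 case: if x·y + x² ≤ 1/(−δ) and y·h ≥ 1 + δ(x² − y²), then
    x + y ≤ h/(−δ) and x·h ≥ 1. -/
theorem n_eq_one_case (δ : ℝ) (hδ : δ < 0)
    (x y h : ℝ) (hx : 0 < x) (hy : 0 < y) (hh : 0 < h) (hyx : y ≤ x)
    (hcond : x * y + x ^ 2 ≤ 1 / (-δ))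
    (hkey : y * h ≥ 1 + δ * (x ^ 2 - y ^ 2)) :
    x + y ≤ h / (-δ) ∧ x * h ≥ 1 := by
  have hδ' : (0:ℝ) < -δ := by linarith
  have hcond' : (-δ) * (x * y + x ^ 2) ≤ 1 := by
    rw [← le_div_iff₀' hδ']; exact hcond
  constructor
  · rw [le_div_iff₀ hδ']
    nlinarith [mul_pos hy hh]
  · nlinarith [mul_le_mul_of_nonneg_right hyx hh.le, mul_nonneg (sub_nonneg.2 hyx) hy.le]
end
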